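/- Suppose λ_1,…,λ_n are real numbers (indices cyclic mod n) satisfying the recurrence k_{j-1} λ_{j-1} = k_j λ_{j+1} for all j. Then the function H(x) = Π_{i=1}^n x_i^{λ_i} is a first integral of the Lotka-Volterra system ẋ_i = x_i(k_i x_{i+1} - k_{i-1} x_{i-1}) on the open positive orthant. -/

import Mathlib

/-!
Since `x i * ∂ᵢH = λᵢ * H` (logarithmic derivative of a monomial), the derivative of `H` along
the field is `H * ∑ᵢ λᵢ (kᵢ xᵢ₊₁ - kᵢ₋₁ xᵢ₋₁)`. Shifting the index in both sums, the coefficient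
of `xⱼ` becomes `kⱼ₋₁ λⱼ₋₁ - kⱼ λⱼ₊₁`, which the recurrence makes zero.
-/

open Finset

section MonomialDerivative

variable {ι : Type*} [Fintype ι] [DecidableEq ι] {x : ι → ℝ}

theorem hasFDerivAt_prod_rpow (hx : ∀ j, x j ≠ 0) (lam : ι → ℝ) :
    HasFDerivAt (fun y : ι → ℝ => ∏ j, y j ^ lam j)
      (∑ j, (∏ l ∈ univ.erase j, x l ^ lam l) •
        (lam j * x j ^ (lam j - 1)) • (ContinuousLinearMap.proj j : (ι → ℝ) →L[ℝ] ℝ)) x :=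
  HasFDerivAt.finsetProd fun j _ =>
    (ContinuousLinearMap.proj (R := ℝ) (φ := fun _ : ι => ℝ) j).hasFDerivAt.rpow_const
      (Or.inl (hx j))

theorem mul_fderiv_prod_rpow_single (hx : ∀ j, x j ≠ 0) (lam : ι → ℝ) (i : ι) :
    x i * fderiv ℝ (fun y : ι → ℝ => ∏ j, y j ^ lam j) x (Pi.single i 1) =
      lam i * ∏ j, x j ^ lam j := by
  rw [(hasFDerivAt_prod_rpow hx lam).fderiv,
    ← mul_prod_erase univ (fun j => x j ^ lam j) (mem_univ i)]
  simp only [_root_.sum_apply, smul_apply, ContinuousLinearMap.proj_apply, Pi.single_apply,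
    smul_eq_mul, mul_ite, mul_one, mul_zero, sum_ite_eq', mem_univ, ↓reduceIte,
    Real.rpow_sub_one (hx i)]
  field_simp [hx i]

end MonomialDerivative

theorem sum_mul_cyclic_sub_eq_zero {G : Type*} [AddCommGroup G] [Fintype G] (a : G)
    (k lam x : G → ℝ) (hrec : ∀ j, k (j - a) * lam (j - a) = k j * lam (j + a)) :
    ∑ i, lam i * (k i * x (i + a) - k (i - a) * x (i - a)) = 0 := by
  have hfwd : ∑ i, lam i * (k i * x (i + a)) = ∑ i, k (i - a) * lam (i - a) * x i :=
    Fintype.sum_equiv (Equiv.addRight a) _ _ fun i => by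
      simp only [Equiv.coe_addRight, add_sub_cancel_right]; ring
  have hbwd : ∑ i, lam i * (k (i - a) * x (i - a)) = ∑ i, k i * lam (i + a) * x i :=
    Fintype.sum_equiv (Equiv.subRight a) _ _ fun i => by
      simp only [Equiv.subRight_apply, sub_add_cancel]; ring
  simp only [mul_sub, sum_sub_distrib, hfwd, hbwd, hrec, sub_self]

theorem lv_lambda_first_integral_general (n : ℕ) [NeZero n]
    (k : Fin n → ℝ)
    (lam : Fin n → ℝ)
    (hrec : ∀ j : Fin n, k (j - 1) * lam (j - 1) = k j * lam (j + 1))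
    (x : Fin n → ℝ) (hx : ∀ i, 0 < x i) :
    ∑ i : Fin n, x i * (k i * x (i + 1) - k (i - 1) * x (i - 1)) *
        fderiv ℝ (fun y : Fin n → ℝ => ∏ j : Fin n, (y j) ^ (lam j)) x
          (Pi.single i 1) = 0 := by
  have hlog := mul_fderiv_prod_rpow_single (fun j => (hx j).ne') lam
  calc _ = ∑ i : Fin n, (k i * x (i + 1) - k (i - 1) * x (i - 1)) *
          (x i * fderiv ℝ (fun y : Fin n → ℝ => ∏ j, y j ^ lam j) x (Pi.single i 1)) :=
        sum_congr rfl fun i _ => by ring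
    _ = (∏ j, x j ^ lam j) * ∑ i, lam i * (k i * x (i + 1) - k (i - 1) * x (i - 1)) := by
        simp only [hlog, mul_sum]; exact sum_congr rfl fun i _ => by ring
    _ = 0 := by rw [sum_mul_cyclic_sub_eq_zero 1 k lam x hrec, mul_zero]

/-- If the reals `λᵢ` (indices cyclic mod `n`) satisfy `k_{j-1} λ_{j-1} = k_j λ_{j+1}`
for all `j`, then `H x = ∏ i, (x i) ^ (λ i)` is a first integral of the
Lotka-Volterra system on the open positive orthant. -/
theorem lv_lambda_first_integral (n : ℕ) [NeZero n] (hn : 2 ≤ n)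
    (k : Fin n → ℝ) (hk : ∀ i, k i ≠ 0)
    (lam : Fin n → ℝ)
    (hrec : ∀ j : Fin n, k (j - 1) * lam (j - 1) = k j * lam (j + 1))
    (x : Fin n → ℝ) (hx : ∀ i, 0 < x i) :
    ∑ i : Fin n, x i * (k i * x (i + 1) - k (i - 1) * x (i - 1)) *
        fderiv ℝ (fun y : Fin n → ℝ => ∏ j : Fin n, (y j) ^ (lam j)) x
          (Pi.single i 1) = 0 :=
  lv_lambda_first_integral_general n k lam hrec x hx
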